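/- If the sequent p1/q1, …, p_{n-1}/q_{n-1}, p_n → s is derivable in L+(CS), where p1,…,pn, q1,…,q_{n-1} and s are primitive types, then there exists a permutation σ of {1,…,n−1} such that q_{σ(i)} = p_{σ(i+1)} for all i = 1,…,n−2, q_{σ(n−1)} = p_n, and p_{σ(1)} = s. -/

import Mathlib

/-- Types of the Lambek calculus `L` (and of `L+(CS)`), built from primitive
types `P` by `\` (`ldiv A B = A \ B`), `/` (`rdiv B A = B / A`) and `·`. -/
inductive Fm0 (P : Type) : Type
  | prim : P → Fm0 P
  | ldiv : Fm0 P → Fm0 P → Fm0 P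
  | rdiv : Fm0 P → Fm0 P → Fm0 P
  | mul  : Fm0 P → Fm0 P → Fm0 P
deriving DecidableEq

/-- Derivability of sequents in the calculus `L+(CS)`: the Lambek calculus
(with cut) extended with the structural rule (CS): from `Pi,Psi → A` infer
`Psi,Pi → A`. -/
inductive Dcs (P : Type) : List (Fm0 P) → Fm0 P → Prop
  | ax (A : Fm0 P) :
      Dcs P [A] A
  | ldivL (Γ Δ Pi : List (Fm0 P)) (A B C : Fm0 P) :
      Dcs P (Γ ++ B :: Δ) C → Dcs P Pi A → Pi ≠ [] →
      Dcs P (Γ ++ Pi ++ Fm0.ldiv A B :: Δ) C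
  | ldivR (Pi : List (Fm0 P)) (A B : Fm0 P) :
      Dcs P (A :: Pi) B → Pi ≠ [] →
      Dcs P Pi (Fm0.ldiv A B)
  | rdivL (Γ Δ Pi : List (Fm0 P)) (A B C : Fm0 P) :
      Dcs P (Γ ++ B :: Δ) C → Dcs P Pi A → Pi ≠ [] →
      Dcs P (Γ ++ Fm0.rdiv B A :: (Pi ++ Δ)) C
  | rdivR (Pi : List (Fm0 P)) (A B : Fm0 P) :
      Dcs P (Pi ++ [A]) B → Pi ≠ [] →
      Dcs P Pi (Fm0.rdiv B A)
  | mulL (Γ Δ : List (Fm0 P)) (A B C : Fm0 P) :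
      Dcs P (Γ ++ A :: B :: Δ) C →
      Dcs P (Γ ++ Fm0.mul A B :: Δ) C
  | mulR (Pi Psi : List (Fm0 P)) (A B : Fm0 P) :
      Dcs P Pi A → Dcs P Psi B → Pi ≠ [] → Psi ≠ [] →
      Dcs P (Pi ++ Psi) (Fm0.mul A B)
  | cs (Pi Psi : List (Fm0 P)) (A : Fm0 P) :
      Dcs P (Pi ++ Psi) A → Pi ≠ [] → Psi ≠ [] →
      Dcs P (Psi ++ Pi) A
  | cut (Γ Δ Pi : List (Fm0 P)) (A B : Fm0 P) :
      Dcs P Pi A → Dcs P (Γ ++ A :: Δ) B → Pi ≠ [] →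
      Dcs P (Γ ++ Pi ++ Δ) B

/-!
Interpret types in the powerset of a commutative monoid: `·` as pointwise sum and both divisions
as its residual. Every sequent derivable in `L+(CS)` is sound there, (CS) holding by
commutativity. Take the monoid of multisets of the indices `i` of the fractions, read as edges
`p_i → q_i`, and interpret a primitive `r` as the multisets that can be ordered into a walk from
`r` to `p_n`. Then `{i}` lies in `p_i/q_i` and `0` in `p_n`, so the multiset of all edges lies in
the antecedent, hence in `s`: the edges can be ordered into a walk from `s` to `p_n`, and this
ordering is `σ`.
-/

open Pointwise

lemma List.Perm.exists_eq_ofFn_perm {n : ℕ} {l : List (Fin n)} (h : l.Perm (List.finRange n)) :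
    ∃ σ : Equiv.Perm (Fin n), l = List.ofFn σ := by
  have hlen : l.length = n := by simpa using h.length_eq
  have hnodup : l.Nodup := h.nodup_iff.mpr (List.nodup_finRange n)
  refine ⟨(finCongr hlen.symm).trans
    (hnodup.getEquivOfForallMemList l fun i => h.mem_iff.mpr (List.mem_finRange i)), ?_⟩
  exact List.ext_getElem (by simp [hlen]) fun k _ _ => by simp

lemma List.ofFn_append_singleton_eq_cons {α : Type*} {m : ℕ} {a b : Fin m → α} {s t : α}
    (h : List.ofFn a ++ [t] = s :: List.ofFn b) :
    (∀ i j : Fin m, (j : ℕ) = i + 1 → b i = a j) ∧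
      (∀ i : Fin m, (i : ℕ) = m - 1 → b i = t) ∧ (∀ i : Fin m, (i : ℕ) = 0 → a i = s) := by
  have hfun : (Fin.snoc a t : Fin (m + 1) → α) = Fin.cons s b := by
    rw [← List.ofFn_inj, List.ofFn_cons, List.ofFn_succ', List.concat_eq_append]
    simpa using h
  refine ⟨fun i j hij => ?_, fun i hi => ?_, fun i hi => ?_⟩
  · have e := congrFun hfun j.castSucc
    rwa [Fin.snoc_castSucc, show j.castSucc = i.succ from Fin.ext (by simpa using hij),
      Fin.cons_succ, eq_comm] at e
  · have e := congrFun hfun (Fin.last m)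
    rwa [Fin.snoc_last, show Fin.last m = i.succ from Fin.ext (by simp; omega),
      Fin.cons_succ, eq_comm] at e
  · have e := congrFun hfun i.castSucc
    rwa [Fin.snoc_castSucc, show i.castSucc = 0 from Fin.ext hi, Fin.cons_zero] at e

namespace Fm0

variable {P : Type} {M : Type*} [AddCommMonoid M]

def interp (v : P → Set M) : Fm0 P → Set M
  | prim r => v r
  | ldiv A B => {x | ∀ y ∈ interp v A, y + x ∈ interp v B}
  | rdiv B A => {x | ∀ y ∈ interp v A, x + y ∈ interp v B}
  | mul A B => interp v A + interp v B

def interpSeq (v : P → Set M) (Γ : List (Fm0 P)) : Set M := (Γ.map (interp v)).sum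

variable {v : P → Set M}

@[simp] lemma interpSeq_nil : interpSeq v [] = 0 := rfl

@[simp] lemma interpSeq_cons (A : Fm0 P) (Γ : List (Fm0 P)) :
    interpSeq v (A :: Γ) = interp v A + interpSeq v Γ := List.sum_cons

@[simp] lemma interpSeq_append (Γ Δ : List (Fm0 P)) :
    interpSeq v (Γ ++ Δ) = interpSeq v Γ + interpSeq v Δ := by
  simp [interpSeq]

lemma add_interp_ldiv_subset (A B : Fm0 P) : interp v A + interp v (ldiv A B) ⊆ interp v B := by
  rintro _ ⟨y, hy, x, hx, rfl⟩
  exact hx y hy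

lemma interp_rdiv_add_subset (A B : Fm0 P) : interp v (rdiv B A) + interp v A ⊆ interp v B := by
  rintro _ ⟨x, hx, y, hy, rfl⟩
  exact hx y hy

lemma subset_interp_ldiv {X : Set M} {A B : Fm0 P} (h : interp v A + X ⊆ interp v B) :
    X ⊆ interp v (ldiv A B) :=
  fun _ hx _ hy => h (Set.add_mem_add hy hx)

lemma subset_interp_rdiv {X : Set M} {A B : Fm0 P} (h : X + interp v A ⊆ interp v B) :
    X ⊆ interp v (rdiv B A) :=
  fun _ hx _ hy => h (Set.add_mem_add hx hy)

end Fm0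

open Fm0

theorem Dcs.sound {P : Type} {M : Type*} [AddCommMonoid M] (v : P → Set M) {Γ : List (Fm0 P)}
    {C : Fm0 P} (h : Dcs P Γ C) : interpSeq v Γ ⊆ interp v C := by
  induction h with
  | ax A => simp
  | ldivL Γ Δ Pi A B C _ _ _ ih₁ ih₂ =>
    simp only [interpSeq_append, interpSeq_cons] at ih₁ ⊢
    calc _ = interpSeq v Γ + (interpSeq v Pi + interp v (ldiv A B)) + interpSeq v Δ := by abel
      _ ⊆ interpSeq v Γ + interp v B + interpSeq v Δ := by
        gcongr
        exact (Set.add_subset_add_right ih₂).trans (add_interp_ldiv_subset A B)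
      _ = _ := by abel
      _ ⊆ _ := ih₁
  | ldivR Pi A B _ _ ih =>
    exact subset_interp_ldiv (by simpa using ih)
  | rdivL Γ Δ Pi A B C _ _ _ ih₁ ih₂ =>
    simp only [interpSeq_append, interpSeq_cons] at ih₁ ⊢
    calc _ = interpSeq v Γ + (interp v (rdiv B A) + interpSeq v Pi) + interpSeq v Δ := by abel
      _ ⊆ interpSeq v Γ + interp v B + interpSeq v Δ := by
        gcongr
        exact (Set.add_subset_add_left ih₂).trans (interp_rdiv_add_subset A B)
      _ = _ := by abel
      _ ⊆ _ := ih₁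
  | rdivR Pi A B _ _ ih =>
    exact subset_interp_rdiv (by simpa using ih)
  | mulL Γ Δ A B C _ ih =>
    simpa [interp, add_assoc] using ih
  | mulR Pi Psi A B _ _ _ _ ih₁ ih₂ =>
    simpa [interp] using Set.add_subset_add ih₁ ih₂
  | cs Pi Psi A _ _ _ ih =>
    simpa [add_comm] using ih
  | cut Γ Δ Pi A B _ _ _ ih₁ ih₂ =>
    simp only [interpSeq_append, interpSeq_cons] at ih₂ ⊢
    calc _ ⊆ interpSeq v Γ + interp v A + interpSeq v Δ := by gcongr
      _ = _ := by abel
      _ ⊆ _ := ih₂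

section Walks

variable {ι : Type*} {P : Type} (src tgt : ι → P)

/-- `l` starts at `r`, each edge starts where the previous one ends, and the last ends at `t`. -/
def IsWalk (l : List ι) (r t : P) : Prop :=
  l.map src ++ [t] = r :: l.map tgt

def walksTo (t r : P) : Set (Multiset ι) :=
  {E | ∃ l, IsWalk src tgt l r t ∧ (l : Multiset ι) = E}

variable {src tgt}

lemma zero_mem_walksTo (t : P) : 0 ∈ walksTo src tgt t t :=
  ⟨[], rfl, rfl⟩

lemma cons_mem_walksTo {t : P} {i : ι} {E : Multiset ι} (h : E ∈ walksTo src tgt t (tgt i)) :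
    i ::ₘ E ∈ walksTo src tgt t (src i) := by
  obtain ⟨l, hl, rfl⟩ := h
  exact ⟨i :: l, by simpa [IsWalk] using hl, rfl⟩

lemma singleton_mem_interp_rdiv_walksTo (t : P) (i : ι) :
    {i} ∈ interp (walksTo src tgt t) (rdiv (prim (src i)) (prim (tgt i))) :=
  fun _ hy => by rw [Multiset.singleton_add]; exact cons_mem_walksTo hy

end Walks

theorem Dcs.exists_perm_walk_of_fractions {P : Type} {m : ℕ} (src tgt : Fin m → P) (s t : P)
    (h : Dcs P ((List.ofFn fun i => rdiv (prim (src i)) (prim (tgt i))) ++ [prim t]) (prim s)) :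
    ∃ σ : Equiv.Perm (Fin m), List.ofFn (src ∘ σ) ++ [t] = s :: List.ofFn (tgt ∘ σ) := by
  have hmem : (List.finRange m : Multiset (Fin m)) ∈
      interpSeq (walksTo src tgt t)
        ((List.ofFn fun i => rdiv (prim (src i)) (prim (tgt i))) ++ [prim t]) := by
    rw [interpSeq_append, interpSeq_cons, interpSeq_nil, add_zero,
      ← add_zero (List.finRange m : Multiset (Fin m))]
    refine Set.add_mem_add ?_ (zero_mem_walksTo t)
    rw [interpSeq, List.map_ofFn, List.ofFn_eq_map,
      ← Multiset.sum_map_singleton (List.finRange m : Multiset (Fin m)), Multiset.map_coe,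
      Multiset.sum_coe]
    exact Set.list_sum_mem_list_sum _ _ _ fun i _ => singleton_mem_interp_rdiv_walksTo t i
  obtain ⟨l, hl, hperm⟩ := h.sound _ hmem
  obtain ⟨σ, rfl⟩ := (Multiset.coe_eq_coe.mp hperm).exists_eq_ofFn_perm
  exact ⟨σ, by simpa [IsWalk, List.map_ofFn] using hl⟩

/-- Here `m = n - 1`: the `p`'s are indexed by `Fin (m + 1)` and the `q`'s by `Fin m`, from `0`. -/
theorem LCS_primitive_sequent_perm (P : Type) (m : ℕ)
    (p : Fin (m + 1) → P) (q : Fin m → P) (s : P)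
    (h : Dcs P
      ((List.ofFn fun i : Fin m => Fm0.rdiv (Fm0.prim (p i.castSucc)) (Fm0.prim (q i)))
        ++ [Fm0.prim (p (Fin.last m))])
      (Fm0.prim s)) :
    ∃ σ : Equiv.Perm (Fin m),
      (∀ i j : Fin m, (j : ℕ) = (i : ℕ) + 1 → q (σ i) = p ((σ j).castSucc)) ∧
      (∀ i : Fin m, (i : ℕ) = m - 1 → q (σ i) = p (Fin.last m)) ∧
      (∀ i : Fin m, (i : ℕ) = 0 → p ((σ i).castSucc) = s) := by
  obtain ⟨σ, hσ⟩ := h.exists_perm_walk_of_fractions (fun i => p i.castSucc) q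
  exact ⟨σ, List.ofFn_append_singleton_eq_cons hσ⟩
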